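/- Let f be a newform of weight 2 and level p^n with n ≥ 2, and suppose the p-adic local representation ρ_{f,p} (attached to f at a prime λ ∤ p) is ramified of level i, i.e., all upper-numbering ramification groups above i act trivially. Then n ≤ 2(i+1). -/

import Mathlib

/-!
Write `c(S) = dim V − dim V^S` for the codimension of the vectors fixed by a subgroup `S`;
it lies between `0` and `dim V = 2`, and it vanishes on every `R u` with `u > i`. Hence the
tame part `c(R 0)` of the conductor is at most `2`, while the wild part `∫₁^∞ c(R u) du` is
supported on `(1, i]` and so is at most `2 · max (i − 1) 0`. Together `n ≤ 2 · max i 1`,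
which is at most `2 (i + 1)` once `i ≥ 0`; and `i < 0` is impossible, since then every term
of the conductor vanishes, whereas `n ≥ 2`.
-/

noncomputable section

namespace ArtinConductor

variable {G : Type} [Group G]

/-- The subspace of vectors fixed by the subgroup `S` under the representation `ρ`. -/
def fixedSubmodule (k V : Type) [Field k] [AddCommGroup V] [Module k V]
    (ρ : Representation k G V) (S : Subgroup G) : Submodule k V :=
  Representation.invariants (V := V) (ρ.comp S.subtype : Representation k S V)

/-- The exponent of the Artin conductor of a representation `ρ`, computed from the
upper-numbering ramification filtration `R` (with inertia `I = R 0`) by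
`a(ρ) = dim V − dim V^{I} + ∫₁^∞ dim (V / V^{G^u}) du`. -/
def artinExponent (k V : Type) [Field k] [AddCommGroup V] [Module k V]
    (R : ℝ → Subgroup G) (ρ : Representation k G V) : ℝ :=
  ((Module.finrank k V : ℝ) -
      (Module.finrank k (fixedSubmodule k V ρ (R 0)) : ℝ)) +
    ∫ u in Set.Ioi (1 : ℝ),
      ((Module.finrank k V : ℝ) -
        (Module.finrank k (fixedSubmodule k V ρ (R u)) : ℝ))

end ArtinConductor

open ArtinConductor

open MeasureTheory Set

theorem setIntegral_Ioi_le_mul_max_of_eq_zero {D : ℝ → ℝ} {a i C : ℝ}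
    (hD_nonneg : ∀ u, 0 ≤ D u) (hD_le : ∀ u, D u ≤ C) (hD_zero : ∀ u, i < u → D u = 0) :
    ∫ u in Ioi a, D u ≤ C * max (i - a) 0 := by
  have hD_le_indicator : ∀ u, D u ≤ (Iic i).indicator (fun _ => C) u := by
    intro u
    rcases le_or_gt u i with hu | hu
    · simpa [indicator_of_mem (mem_Iic.2 hu)] using hD_le u
    · simp [indicator_of_notMem (notMem_Iic.2 hu), hD_zero u hu]
  have hC_integrable : IntegrableOn ((Iic i).indicator fun _ => C) (Ioi a) := by
    rw [IntegrableOn, integrable_indicator_iff measurableSet_Iic, IntegrableOn,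
      Measure.restrict_restrict measurableSet_Iic, Iic_inter_Ioi]
    exact integrableOn_const measure_Ioc_lt_top.ne
  -- `D` need not be integrable: if it is not, its integral is the junk value `0`.
  calc ∫ u in Ioi a, D u
      ≤ ∫ u in Ioi a, (Iic i).indicator (fun _ => C) u :=
        integral_mono_of_nonneg (ae_of_all _ hD_nonneg) hC_integrable
          (ae_of_all _ hD_le_indicator)
    _ = C * max (i - a) 0 := by
        rw [integral_indicator measurableSet_Iic, Measure.restrict_restrict measurableSet_Iic,
          setIntegral_const, Iic_inter_Ioi, Real.volume_real_Ioc, smul_eq_mul, mul_comm]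

namespace ArtinConductor

variable {G k V : Type} [Group G] [Field k] [AddCommGroup V] [Module k V]
  (ρ : Representation k G V)

def fixedCodim (S : Subgroup G) : ℝ :=
  (Module.finrank k V : ℝ) - (Module.finrank k (fixedSubmodule k V ρ S) : ℝ)

theorem artinExponent_eq_fixedCodim (R : ℝ → Subgroup G) :
    artinExponent k V R ρ = fixedCodim ρ (R 0) + ∫ u in Ioi 1, fixedCodim ρ (R u) :=
  rfl

theorem fixedCodim_nonneg [FiniteDimensional k V] (S : Subgroup G) : 0 ≤ fixedCodim ρ S :=
  sub_nonneg.2 (by exact_mod_cast Submodule.finrank_le _)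

theorem fixedCodim_le_finrank (S : Subgroup G) : fixedCodim ρ S ≤ Module.finrank k V :=
  sub_le_self _ (Nat.cast_nonneg _)

theorem fixedSubmodule_eq_top {S : Subgroup G} (hS : ∀ g ∈ S, ∀ x : V, ρ g x = x) :
    fixedSubmodule k V ρ S = ⊤ :=
  eq_top_iff.2 fun x _ g => hS g g.2 x

theorem fixedCodim_eq_zero {S : Subgroup G} (hS : ∀ g ∈ S, ∀ x : V, ρ g x = x) :
    fixedCodim ρ S = 0 := by
  rw [fixedCodim, fixedSubmodule_eq_top ρ hS, finrank_top, sub_self]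

variable {R : ℝ → Subgroup G} {i : ℝ}

theorem artinExponent_eq_zero_of_neg (hi : i < 0)
    (hlevel : ∀ u : ℝ, i < u → ∀ g ∈ R u, ∀ x : V, ρ g x = x) :
    artinExponent k V R ρ = 0 := by
  have hwild : ∀ u ∈ Ioi (1 : ℝ), fixedCodim ρ (R u) = 0 := fun u hu =>
    fixedCodim_eq_zero ρ (hlevel u (hi.trans (zero_lt_one.trans hu)))
  rw [artinExponent_eq_fixedCodim, fixedCodim_eq_zero ρ (hlevel 0 hi),
    setIntegral_congr_fun measurableSet_Ioi hwild, integral_zero, add_zero]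

theorem artinExponent_le_finrank_mul_max [FiniteDimensional k V]
    (hlevel : ∀ u : ℝ, i < u → ∀ g ∈ R u, ∀ x : V, ρ g x = x) :
    artinExponent k V R ρ ≤ Module.finrank k V * max i 1 := by
  have hwild : ∫ u in Ioi 1, fixedCodim ρ (R u) ≤ Module.finrank k V * max (i - 1) 0 :=
    setIntegral_Ioi_le_mul_max_of_eq_zero (fun u => fixedCodim_nonneg ρ (R u))
      (fun u => fixedCodim_le_finrank ρ (R u)) (fun u hu => fixedCodim_eq_zero ρ (hlevel u hu))
  have hmax : max i 1 = 1 + max (i - 1) 0 := by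
    rw [← max_add_add_left]; ring_nf
  rw [artinExponent_eq_fixedCodim, hmax, mul_add, mul_one]
  exact add_le_add (fixedCodim_le_finrank ρ (R 0)) hwild

end ArtinConductor

theorem level_exponent_le_of_ramified_of_level_general
    (G : Type) [Group G] (R : ℝ → Subgroup G)
    (k V : Type) [Field k] [AddCommGroup V] [Module k V] [FiniteDimensional k V]
    (hdim : Module.finrank k V = 2)
    (ρ : Representation k G V)
    (n : ℕ) (hn : 2 ≤ n)
    (hCarayol : artinExponent k V R ρ = n)
    (i : ℝ)
    (hlevel : ∀ u : ℝ, i < u → ∀ g ∈ R u, ∀ x : V, ρ g x = x) :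
    (n : ℝ) ≤ 2 * (i + 1) := by
  have hi : 0 ≤ i := by
    by_contra! hi
    have : (n : ℝ) = 0 := hCarayol ▸ artinExponent_eq_zero_of_neg ρ hi hlevel
    norm_cast at this
    omega
  have hbound := artinExponent_le_finrank_mul_max ρ hlevel
  rw [hCarayol, hdim] at hbound
  push_cast at hbound
  calc (n : ℝ) ≤ 2 * max i 1 := hbound
    _ ≤ 2 * (i + 1) := by gcongr; exact max_le (by linarith) (by linarith)

/-- Let `f` be a newform of weight `2` and level `p ^ n` with `n ≥ 2`, and let
`ρ = ρ_{f,p}` be the associated `2`-dimensional local Galois representation at `p` (for a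
prime `λ ∤ p`), so that by Carayol's theorem the exponent of its Artin conductor equals `n`.
If `ρ` is ramified of level `i` — i.e. all upper-numbering ramification groups `R u` with
`u > i` act trivially — then `n ≤ 2 (i + 1)`. -/
theorem level_exponent_le_of_ramified_of_level
    (G : Type) [Group G] (R : ℝ → Subgroup G) (hR : Antitone R)
    (k V : Type) [Field k] [AddCommGroup V] [Module k V] [FiniteDimensional k V]
    (hdim : Module.finrank k V = 2)
    (ρ : Representation k G V)
    (n : ℕ) (hn : 2 ≤ n)
    (hCarayol : artinExponent k V R ρ = n)
    (i : ℝ)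
    (hlevel : ∀ u : ℝ, i < u → ∀ g ∈ R u, ∀ x : V, ρ g x = x) :
    (n : ℝ) ≤ 2 * (i + 1) :=
  level_exponent_le_of_ramified_of_level_general G R k V hdim ρ n hn hCarayol i hlevel
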